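/- arXiv:2502.20781 — 3 statements merged into one kernel-verified Lean document; each statement's English description precedes it below -/
import Mathlib

section
/- Let $[l,h) \subseteq [0,1)$ with $l < h$ and let $m = -\lfloor \log_2(h-l) \rfloor$. Then $l \le \lceil l \cdot 2^m \rceil \cdot 2^{-m} < h$, i.e., the real number $\lceil l 2^m \rceil / 2^m$ always lies in $[l,h)$. -/
open Real

theorem stmt_1 (l h : ℝ) (h0 : 0 ≤ l) (hlh : l < h) (h1 : h ≤ 1)
    (m : ℤ) (hm : m = -⌊Real.logb 2 (h - l)⌋) :
    l ≤ (⌈l * (2 : ℝ) ^ m⌉ : ℝ) * (2 : ℝ) ^ (-m) ∧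
      (⌈l * (2 : ℝ) ^ m⌉ : ℝ) * (2 : ℝ) ^ (-m) < h := by
  have hd0 : 0 < h - l := by linarith
  have hle : (2:ℝ) ^ (-m) ≤ h - l := by
    have h1' : (2:ℝ) ^ (-m) = (2:ℝ) ^ ((-m : ℤ) : ℝ) := (Real.rpow_intCast 2 (-m)).symm
    rw [h1', hm]
    have h2' : ((-(-⌊Real.logb 2 (h - l)⌋) : ℤ) : ℝ) = (⌊Real.logb 2 (h - l)⌋ : ℝ) := by
      push_cast; ring
    rw [h2']
    calc (2:ℝ) ^ ((⌊Real.logb 2 (h - l)⌋ : ℝ))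
        ≤ (2:ℝ) ^ (Real.logb 2 (h - l)) :=
          Real.rpow_le_rpow_of_exponent_le one_le_two (Int.floor_le _)
      _ = h - l := Real.rpow_logb two_pos (by norm_num) hd0
  have hp : (0:ℝ) < (2:ℝ) ^ m := zpow_pos two_pos m
  have hpn : (0:ℝ) < (2:ℝ) ^ (-m) := zpow_pos two_pos _
  have hmul : (2:ℝ) ^ m * (2:ℝ) ^ (-m) = 1 := by
    rw [← zpow_add₀ (two_ne_zero : (2:ℝ) ≠ 0), add_neg_cancel, zpow_zero]
  have hceil := Int.le_ceil (l * (2:ℝ) ^ m)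
  have hceil' := Int.ceil_lt_add_one (l * (2:ℝ) ^ m)
  constructor
  · have : l = l * (2:ℝ) ^ m * (2:ℝ) ^ (-m) := by
      rw [mul_assoc, hmul, mul_one]
    nlinarith
  · have : (⌈l * (2:ℝ) ^ m⌉ : ℝ) * (2:ℝ) ^ (-m)
        < (l * (2:ℝ) ^ m + 1) * (2:ℝ) ^ (-m) := by nlinarith
    have heq : (l * (2:ℝ) ^ m + 1) * (2:ℝ) ^ (-m) = l + (2:ℝ) ^ (-m) := by
      rw [add_mul, mul_assoc, hmul, mul_one, one_mul]
    linarith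
end

section
/- Define $f : \mathbb{R} \to \mathbb{R}$ by $f(u) = \frac{u}{3\sqrt{2}-4}$ for $0 \le u < \sqrt{2}-1$, $f(u) = \frac{1}{2-\sqrt{2}}$ for $\sqrt{2}-1 \le u < 2-\sqrt{2}$, $f(u) = \frac{1-u}{3\sqrt{2}-4}$ for $2-\sqrt{2} \le u < 1$, and $f(u) = 0$ otherwise. Then $f$ satisfies the functional equation $2^{1/2} f(u) = f(u \sqrt{2}) + f((u - (1 - 1/\sqrt{2}))\sqrt{2})$ for all $u \in [0,1)$, and $\int_0^1 f(u)\,du = 1$. -/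
open Real MeasureTheory

set_option maxHeartbeats 2000000 in
theorem stmt_7 (f : ℝ → ℝ)
    (hf : ∀ u : ℝ, f u =
      if 0 ≤ u ∧ u < Real.sqrt 2 - 1 then u / (3 * Real.sqrt 2 - 4)
      else if Real.sqrt 2 - 1 ≤ u ∧ u < 2 - Real.sqrt 2 then 1 / (2 - Real.sqrt 2)
      else if 2 - Real.sqrt 2 ≤ u ∧ u < 1 then (1 - u) / (3 * Real.sqrt 2 - 4)
      else 0) :
    (∀ u ∈ Set.Ico (0 : ℝ) 1,
      2 ^ ((1 : ℝ) / 2) * f u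
        = f (u * Real.sqrt 2) + f ((u - (1 - 1 / Real.sqrt 2)) * Real.sqrt 2)) ∧
    ∫ u in (0 : ℝ)..1, f u = 1 := by
  constructor
  ·
    have hs : Real.sqrt 2 * Real.sqrt 2 = 2 := Real.mul_self_sqrt (by norm_num)
    have hs1 : 1.414 < Real.sqrt 2 := by nlinarith [Real.sqrt_nonneg 2]
    have hs2 : Real.sqrt 2 < 1.41422 := by nlinarith [Real.sqrt_nonneg 2]
    have hpos : (0:ℝ) < Real.sqrt 2 := by linarith
    have h34 : 3 * Real.sqrt 2 - 4 ≠ 0 := by nlinarith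
    have h2s : 2 - Real.sqrt 2 ≠ 0 := by nlinarith
    intro u hu
    obtain ⟨hu0, hu1⟩ := hu
    have harg : (u - (1 - 1 / Real.sqrt 2)) * Real.sqrt 2 = u * Real.sqrt 2 - (Real.sqrt 2 - 1) := by
      field_simp
    have m0 : 0 ≤ u * Real.sqrt 2 := mul_nonneg hu0 hpos.le
    have mu : u * Real.sqrt 2 * Real.sqrt 2 = 2 * u := by nlinarith [hs]
    rw [show (2:ℝ)^((1:ℝ)/2) = Real.sqrt 2 from (Real.sqrt_eq_rpow 2).symm]
    rw [hf u, harg, hf (u * Real.sqrt 2), hf (u * Real.sqrt 2 - (Real.sqrt 2 - 1))]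
    rcases lt_or_ge u (1 - Real.sqrt 2 / 2) with hA | hA
    · -- case 1 : u ∈ [0, 1-√2/2)
      have m1 : u * Real.sqrt 2 < (1 - Real.sqrt 2 / 2) * Real.sqrt 2 :=
        mul_lt_mul_of_pos_right hA hpos
      rw [if_pos ⟨hu0, by nlinarith⟩, if_pos ⟨m0, by nlinarith⟩,
        if_neg (by rintro ⟨h, -⟩; nlinarith), if_neg (by rintro ⟨h, -⟩; nlinarith),
        if_neg (by rintro ⟨h, -⟩; nlinarith)]
      field_simp
      ring
    rcases lt_or_ge u (Real.sqrt 2 - 1) with hB | hB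
    · -- case 2 : u ∈ [1-√2/2, √2-1)
      have m1 : (1 - Real.sqrt 2 / 2) * Real.sqrt 2 ≤ u * Real.sqrt 2 :=
        mul_le_mul_of_nonneg_right hA hpos.le
      have m2 : u * Real.sqrt 2 < (Real.sqrt 2 - 1) * Real.sqrt 2 :=
        mul_lt_mul_of_pos_right hB hpos
      rw [if_pos ⟨hu0, hB⟩, if_neg (by rintro ⟨-, h⟩; nlinarith),
        if_pos ⟨by nlinarith, by nlinarith⟩, if_pos ⟨by nlinarith, by nlinarith⟩]
      field_simp
      have h34' : Real.sqrt 2 * 3 - 4 ≠ 0 := by nlinarith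
      field_simp
      ring_nf
      nlinarith [hs]
    rcases lt_or_ge u (2 - Real.sqrt 2) with hC | hC
    · -- case 3 : u ∈ [√2-1, 2-√2)
      have m1 : (Real.sqrt 2 - 1) * Real.sqrt 2 ≤ u * Real.sqrt 2 :=
        mul_le_mul_of_nonneg_right hB hpos.le
      have m2 : u * Real.sqrt 2 < (2 - Real.sqrt 2) * Real.sqrt 2 :=
        mul_lt_mul_of_pos_right hC hpos
      rw [if_neg (by rintro ⟨-, h⟩; nlinarith), if_pos ⟨hB, hC⟩,
        if_neg (by rintro ⟨-, h⟩; nlinarith), if_neg (by rintro ⟨-, h⟩; nlinarith),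
        if_pos ⟨by nlinarith, by nlinarith⟩, if_pos ⟨by nlinarith, by nlinarith⟩]
      field_simp
      have h34' : Real.sqrt 2 * 3 - 4 ≠ 0 := by nlinarith
      field_simp
      ring_nf
      nlinarith [hs]
    rcases lt_or_ge u (Real.sqrt 2 / 2) with hD | hD
    · -- case 4 : u ∈ [2-√2, √2/2)
      have m1 : (2 - Real.sqrt 2) * Real.sqrt 2 ≤ u * Real.sqrt 2 :=
        mul_le_mul_of_nonneg_right hC hpos.le
      have m2 : u * Real.sqrt 2 < (Real.sqrt 2 / 2) * Real.sqrt 2 :=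
        mul_lt_mul_of_pos_right hD hpos
      rw [if_neg (by rintro ⟨-, h⟩; nlinarith), if_neg (by rintro ⟨-, h⟩; nlinarith),
        if_pos ⟨hC, hu1⟩,
        if_neg (by rintro ⟨-, h⟩; nlinarith), if_neg (by rintro ⟨-, h⟩; nlinarith),
        if_pos ⟨by nlinarith, by nlinarith⟩,
        if_neg (by rintro ⟨-, h⟩; nlinarith), if_pos ⟨by nlinarith, by nlinarith⟩]
      field_simp
      have h34' : Real.sqrt 2 * 3 - 4 ≠ 0 := by nlinarith
      field_simp
      ring_nf
      nlinarith [hs]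
    · -- case 5 : u ∈ [√2/2, 1)
      have m1 : (Real.sqrt 2 / 2) * Real.sqrt 2 ≤ u * Real.sqrt 2 :=
        mul_le_mul_of_nonneg_right hD hpos.le
      have m2 : u * Real.sqrt 2 < 1 * Real.sqrt 2 :=
        mul_lt_mul_of_pos_right hu1 hpos
      rw [if_neg (by rintro ⟨-, h⟩; nlinarith), if_neg (by rintro ⟨-, h⟩; nlinarith),
        if_pos ⟨by nlinarith, hu1⟩,
        if_neg (by rintro ⟨-, h⟩; nlinarith), if_neg (by rintro ⟨-, h⟩; nlinarith),
        if_neg (by rintro ⟨-, h⟩; nlinarith),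
        if_neg (by rintro ⟨-, h⟩; nlinarith), if_neg (by rintro ⟨-, h⟩; nlinarith),
        if_pos ⟨by nlinarith, by nlinarith⟩]
      field_simp
      ring_nf
  ·
    have hs : Real.sqrt 2 * Real.sqrt 2 = 2 := Real.mul_self_sqrt (by norm_num)
    have hs1 : 1.414 < Real.sqrt 2 := by nlinarith [Real.sqrt_nonneg 2]
    have hs2 : Real.sqrt 2 < 1.41422 := by nlinarith [Real.sqrt_nonneg 2]
    have h34 : 3 * Real.sqrt 2 - 4 ≠ 0 := by nlinarith
    have h2s : 2 - Real.sqrt 2 ≠ 0 := by nlinarith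
    have h0a : (0:ℝ) ≤ Real.sqrt 2 - 1 := by nlinarith
    have hab : Real.sqrt 2 - 1 ≤ 2 - Real.sqrt 2 := by nlinarith
    have hb1 : 2 - Real.sqrt 2 ≤ 1 := by nlinarith
    have e1 : Set.EqOn f (fun u => u / (3 * Real.sqrt 2 - 4)) (Set.Icc 0 (Real.sqrt 2 - 1)) := by
      intro x hx
      obtain ⟨hx0, hx1⟩ := hx
      rw [hf x]
      split_ifs with h1 h2 h3
      · rfl
      · have hxa : x = Real.sqrt 2 - 1 := le_antisymm hx1 h2.1
        subst hxa
        show 1 / (2 - Real.sqrt 2) = (Real.sqrt 2 - 1) / (3 * Real.sqrt 2 - 4)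
        field_simp
        have h34' : Real.sqrt 2 * 3 - 4 ≠ 0 := by nlinarith
        field_simp
        nlinarith
      · exfalso; nlinarith [h3.1]
      · exfalso; push_neg at h1 h2
        have h1' := h1 hx0
        have h2' := h2 h1'
        nlinarith
    have e2 : Set.EqOn f (fun _ => 1 / (2 - Real.sqrt 2))
        (Set.Icc (Real.sqrt 2 - 1) (2 - Real.sqrt 2)) := by
      intro x hx
      obtain ⟨hx0, hx1⟩ := hx
      rw [hf x]
      split_ifs with h1 h2 h3
      · exfalso; nlinarith [h1.2]
      · rfl
      · have hxb : x = 2 - Real.sqrt 2 := le_antisymm hx1 h3.1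
        subst hxb
        show (1 - (2 - Real.sqrt 2)) / (3 * Real.sqrt 2 - 4) = 1 / (2 - Real.sqrt 2)
        field_simp
        have h34' : Real.sqrt 2 * 3 - 4 ≠ 0 := by nlinarith
        field_simp
        nlinarith
      · exfalso; push_neg at h2 h3
        have h2' := h2 hx0
        have h3' := h3 h2'
        nlinarith
    have e3 : Set.EqOn f (fun u => (1 - u) / (3 * Real.sqrt 2 - 4))
        (Set.Icc (2 - Real.sqrt 2) 1) := by
      intro x hx
      obtain ⟨hx0, hx1⟩ := hx
      rw [hf x]
      split_ifs with h1 h2 h3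
      · exfalso; nlinarith [h1.2]
      · exfalso; nlinarith [h2.2]
      · rfl
      · have hx1' : x = 1 := by
          push_neg at h3
          exact le_antisymm hx1 (h3 hx0)
        subst hx1'
        show (0:ℝ) = (1 - 1) / (3 * Real.sqrt 2 - 4)
        simp
    -- integrability
    have i1 : IntervalIntegrable f volume 0 (Real.sqrt 2 - 1) := by
      rw [intervalIntegrable_iff_integrableOn_Icc_of_le h0a]
      exact ((continuous_id.div_const _).integrableOn_Icc).congr_fun e1.symm measurableSet_Icc
    have i2 : IntervalIntegrable f volume (Real.sqrt 2 - 1) (2 - Real.sqrt 2) := by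
      rw [intervalIntegrable_iff_integrableOn_Icc_of_le hab]
      exact (continuous_const.integrableOn_Icc).congr_fun e2.symm measurableSet_Icc
    have i3 : IntervalIntegrable f volume (2 - Real.sqrt 2) 1 := by
      rw [intervalIntegrable_iff_integrableOn_Icc_of_le hb1]
      exact (((continuous_const.sub continuous_id).div_const _).integrableOn_Icc).congr_fun
        e3.symm measurableSet_Icc
    -- split the integral
    rw [← intervalIntegral.integral_add_adjacent_intervals (i1.trans i2) i3,
        ← intervalIntegral.integral_add_adjacent_intervals i1 i2]
    have c1 : ∫ u in (0:ℝ)..(Real.sqrt 2 - 1), f u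
        = ∫ u in (0:ℝ)..(Real.sqrt 2 - 1), u / (3 * Real.sqrt 2 - 4) :=
      intervalIntegral.integral_congr (by rwa [Set.uIcc_of_le h0a])
    have c2 : ∫ u in (Real.sqrt 2 - 1)..(2 - Real.sqrt 2), f u
        = ∫ _ in (Real.sqrt 2 - 1)..(2 - Real.sqrt 2), (1 / (2 - Real.sqrt 2) : ℝ) :=
      intervalIntegral.integral_congr (by rwa [Set.uIcc_of_le hab])
    have c3 : ∫ u in (2 - Real.sqrt 2)..(1:ℝ), f u
        = ∫ u in (2 - Real.sqrt 2)..(1:ℝ), (1 - u) / (3 * Real.sqrt 2 - 4) :=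
      intervalIntegral.integral_congr (by rwa [Set.uIcc_of_le hb1])
    rw [c1, c2, c3]
    have v1 : ∫ u in (0:ℝ)..(Real.sqrt 2 - 1), u / (3 * Real.sqrt 2 - 4)
        = ((Real.sqrt 2 - 1) ^ 2 - 0 ^ 2) / 2 / (3 * Real.sqrt 2 - 4) := by
      rw [intervalIntegral.integral_div, integral_id]
    have v2 : ∫ _ in (Real.sqrt 2 - 1)..(2 - Real.sqrt 2), (1 / (2 - Real.sqrt 2) : ℝ)
        = ((2 - Real.sqrt 2) - (Real.sqrt 2 - 1)) * (1 / (2 - Real.sqrt 2)) := by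
      rw [intervalIntegral.integral_const, smul_eq_mul]
    have v3 : ∫ u in (2 - Real.sqrt 2)..(1:ℝ), (1 - u) / (3 * Real.sqrt 2 - 4)
        = ((1 - (2 - Real.sqrt 2)) - ((1:ℝ) ^ 2 - (2 - Real.sqrt 2) ^ 2) / 2) / (3 * Real.sqrt 2 - 4) := by
      rw [intervalIntegral.integral_div, intervalIntegral.integral_sub
        (intervalIntegrable_const) (intervalIntegral.intervalIntegrable_id),
        intervalIntegral.integral_const, integral_id, smul_eq_mul, mul_one]
    rw [v1, v2, v3]
    field_simp
    have h34' : Real.sqrt 2 * 3 - 4 ≠ 0 := by nlinarith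
    field_simp
    nlinarith [hs, sq_nonneg (Real.sqrt 2 - 1)]
end

section
/- Let $0 < r < 1$, $n \ge 1$ with $nr \in \mathbb{Z}$, and $x^n \in \{0,1\}^n$. Let $y^n = x^n \oplus 1^n$ be the complement, $s(x^n) = (1-2^{-r})\sum_i x_i 2^{ir}$, and $\tau = (1-2^{-r})\sum_{i=1}^n (1-2x_i) 2^{ir}$. If $|\tau| < 1$, then $\lceil s(x^n) \rceil = \lceil s(y^n) \rceil = 2^{nr - 1}$; in particular, $x^n$ and its complement coexist in the $2^{nr-1}$-th coset. -/
open Real Finset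

theorem stmt_15 (r : ℝ) (hr0 : 0 < r) (hr1 : r < 1) (n : ℕ) (hn : 1 ≤ n)
    (hnr : ∃ k : ℤ, (n : ℝ) * r = (k : ℝ))
    (x y : ℕ → ℝ) (hx : ∀ i, x i = 0 ∨ x i = 1)
    (hcomp : ∀ i, 1 ≤ i → i ≤ n → y i = 1 - x i)
    (hτ : |(1 - 2 ^ (-r)) * ∑ i ∈ Finset.range n, (1 - 2 * x (i + 1)) * (2 : ℝ) ^ (((i : ℝ) + 1) * r)| < 1) :
    (⌈(1 - 2 ^ (-r)) * ∑ i ∈ Finset.range n, x (i + 1) * (2 : ℝ) ^ (((i : ℝ) + 1) * r)⌉ : ℝ)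
        = 2 ^ ((n : ℝ) * r - 1) ∧
      (⌈(1 - 2 ^ (-r)) * ∑ i ∈ Finset.range n, y (i + 1) * (2 : ℝ) ^ (((i : ℝ) + 1) * r)⌉ : ℝ)
        = 2 ^ ((n : ℝ) * r - 1) := by
  obtain ⟨k, hk⟩ := hnr
  have h2 : (0:ℝ) < 2 := by norm_num
  set c : ℝ := 1 - 2 ^ (-r) with hc
  set w : ℕ → ℝ := fun i => (2:ℝ) ^ (((i:ℝ)+1) * r) with hw
  -- telescoping
  have htel : c * ∑ i ∈ range n, w i = 2 ^ ((n:ℝ)*r) - 1 := by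
    have hsum := Finset.sum_range_sub (f := fun i => (2:ℝ)^((i:ℝ)*r)) n
    rw [Finset.mul_sum]
    calc ∑ i ∈ range n, c * w i
        = ∑ i ∈ range n, ((2:ℝ)^((((i+1:ℕ)):ℝ)*r) - 2^((i:ℝ)*r)) := by
          refine Finset.sum_congr rfl fun i _ => ?_
          rw [hw, hc, sub_mul, one_mul, ← Real.rpow_add h2]
          push_cast
          ring_nf
      _ = 2^((n:ℝ)*r) - 2^(((0:ℕ):ℝ)*r) := hsum
      _ = 2^((n:ℝ)*r) - 1 := by norm_num
  set sx : ℝ := c * ∑ i ∈ range n, x (i+1) * w i with hsx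
  set sy : ℝ := c * ∑ i ∈ range n, y (i+1) * w i with hsy
  have hτ' : c * ∑ i ∈ range n, (1 - 2 * x (i + 1)) * w i
      = (2 ^ ((n:ℝ)*r) - 1) - 2 * sx := by
    have h1 : ∑ i ∈ range n, (1 - 2 * x (i + 1)) * w i
        = ∑ i ∈ range n, w i - 2 * ∑ i ∈ range n, x (i+1) * w i := by
      rw [Finset.mul_sum, ← Finset.sum_sub_distrib]
      exact Finset.sum_congr rfl fun i _ => by ring
    rw [h1, hsx, mul_sub, htel]
    ring
  have hsy' : sy = (2 ^ ((n:ℝ)*r) - 1) - sx := by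
    have h1 : ∑ i ∈ range n, y (i + 1) * w i
        = ∑ i ∈ range n, w i - ∑ i ∈ range n, x (i+1) * w i := by
      rw [← Finset.sum_sub_distrib]
      refine Finset.sum_congr rfl fun i hi => ?_
      rw [hcomp (i+1) (by omega) (by have := Finset.mem_range.mp hi; omega)]
      ring
    rw [hsy, h1, mul_sub, htel, hsx]
  rw [hτ'] at hτ
  have hτlt := abs_lt.mp hτ
  -- k ≥ 1
  have hk1 : 1 ≤ k := by
    have : (0:ℝ) < (k:ℝ) := by
      rw [← hk]
      have : (1:ℝ) ≤ (n:ℝ) := by exact_mod_cast hn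
      nlinarith
    exact_mod_cast this
  set m : ℤ := 2 ^ (k-1).toNat with hm
  have hmr : (m:ℝ) = 2 ^ ((k:ℝ) - 1) := by
    rw [hm]
    push_cast
    rw [← Real.rpow_natCast 2 (k-1).toNat]
    congr 1
    have : ((k-1).toNat : ℤ) = k - 1 := Int.toNat_of_nonneg (by omega)
    exact_mod_cast this
  have hT : (2:ℝ) ^ ((n:ℝ)*r) = 2 * m := by
    rw [hk, hmr, show (k:ℝ) = ((k:ℝ)-1)+1 by ring, Real.rpow_add h2, Real.rpow_one]
    ring
  rw [hT] at hτlt hsy'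
  have hgoal : (2:ℝ) ^ ((n:ℝ)*r - 1) = (m:ℝ) := by
    rw [hk, hmr]
  constructor
  · rw [hgoal]
    congr 1
    rw [Int.ceil_eq_iff]
    constructor <;> [skip; skip] <;> push_cast <;> linarith [hτlt.1, hτlt.2]
  · rw [hgoal]
    congr 1
    rw [Int.ceil_eq_iff]
    constructor <;> push_cast <;> linarith [hτlt.1, hτlt.2]
end
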